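/- Let H be a real Hilbert space, E : H → ℝ Fréchet differentiable, and ξ : [0,∞) → H differentiable with ξ'(t) = −∇E(ξ(t)) for all t ≥ 0. Let γ∞ ∈ H, Z > 0, δ ∈ (0,1], θ ∈ (1/2,1), and suppose ‖∇E(η)‖ ≥ Z(E(η) − E(γ∞))^θ for all η with ‖η − γ∞‖ < δ. Assume that for all t ≥ 0 one has ‖ξ(t) − γ∞‖ < δ and E(ξ(t)) > E(γ∞), and that ξ(t) → γ∞ as t → ∞. Then for all t ≥ 0: E(ξ(t)) − E(γ∞) ≤ ( Z²(2θ−1) t + (E(ξ(0)) − E(γ∞))^{1−2θ} )^{−1/(2θ−1)} and ‖ξ(t) − γ∞‖ ≤ (1/(Z(1−θ))) ( Z²(2θ−1) t + (E(ξ(0)) − E(γ∞))^{1−2θ} )^{−(1−θ)/(2θ−1)}. -/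

import Mathlib

/-!
Along the flow, `f(t) = E(ξ t) - E(γ∞)` satisfies `f' = -‖∇E(ξ t)‖² ≤ -Z² f^{2θ}` by the
Łojasiewicz inequality, so `f^{1-2θ} - Z²(2θ-1) t` is nondecreasing; this is the energy bound.
For the distance, `-f^{1-θ} / (Z(1-θ))` has derivative `f^{-θ}‖∇E‖² / Z ≥ ‖∇E‖ = ‖ξ'‖`, so the
length of the trajectory after time `t` is at most `f(t)^{1-θ} / (Z(1-θ))`; raising the energy
bound to the power `1-θ` gives the distance bound.
-/

open Filter Set Topology

section Scalar

variable {f f' : ℝ → ℝ} {c q : ℝ}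

theorem monotoneOn_rpow_sub_mul_of_hasDerivAt_le (hq : 1 < q)
    (hpos : ∀ s ∈ Ici (0 : ℝ), 0 < f s) (hf : ∀ s ∈ Ici (0 : ℝ), HasDerivAt f (f' s) s)
    (hf' : ∀ s ∈ Ici (0 : ℝ), f' s ≤ -(c * f s ^ q)) :
    MonotoneOn (fun u => f u ^ (1 - q) - c * (q - 1) * u) (Ici 0) := by
  have hderiv : ∀ s ∈ Ici (0 : ℝ), HasDerivAt (fun u => f u ^ (1 - q) - c * (q - 1) * u)
      ((1 - q) * f s ^ (1 - q - 1) * f' s - c * (q - 1)) s := fun s hs =>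
    ((Real.hasDerivAt_rpow_const (Or.inl (hpos s hs).ne')).comp s (hf s hs)).sub
      ((hasDerivAt_id s).const_mul _ |>.congr_deriv (mul_one _))
  refine monotoneOn_of_hasDerivWithinAt_nonneg (convex_Ici 0)
    (fun s hs => (hderiv s hs).continuousAt.continuousWithinAt)
    (fun s hs => (hderiv s (interior_subset hs)).hasDerivWithinAt) fun s hs => ?_
  have hs := interior_subset hs
  have hinv : f s ^ (1 - q - 1) * f s ^ q = 1 := by
    rw [← Real.rpow_add (hpos s hs)]; simp
  have hnn : 0 ≤ f s ^ (1 - q - 1) := (Real.rpow_pos_of_pos (hpos s hs) _).le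
  have hPf' : f s ^ (1 - q - 1) * f' s ≤ -c := by
    calc f s ^ (1 - q - 1) * f' s ≤ f s ^ (1 - q - 1) * -(c * f s ^ q) :=
          mul_le_mul_of_nonneg_left (hf' s hs) hnn
      _ = -c := by rw [mul_neg, mul_left_comm, hinv, mul_one]
  nlinarith

theorem le_rpow_of_hasDerivAt_le_neg_mul_rpow (hc : 0 ≤ c) (hq : 1 < q)
    (hpos : ∀ s ∈ Ici (0 : ℝ), 0 < f s) (hf : ∀ s ∈ Ici (0 : ℝ), HasDerivAt f (f' s) s)
    (hf' : ∀ s ∈ Ici (0 : ℝ), f' s ≤ -(c * f s ^ q)) {t : ℝ} (ht : 0 ≤ t) :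
    f t ≤ (c * (q - 1) * t + f 0 ^ (1 - q)) ^ (-(1 / (q - 1))) := by
  have hmono := monotoneOn_rpow_sub_mul_of_hasDerivAt_le hq hpos hf hf' self_mem_Ici ht ht
  have hA : 0 < c * (q - 1) * t + f 0 ^ (1 - q) := by
    have := Real.rpow_pos_of_pos (hpos 0 self_mem_Ici) (1 - q)
    have : 0 ≤ c * (q - 1) * t := by have := sub_pos.2 hq; positivity
    linarith
  have hexp : -(1 / (q - 1)) = (1 - q)⁻¹ := by
    rw [← neg_sub, one_div_neg_eq_neg_one_div, neg_neg, one_div]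
  rw [hexp, Real.le_rpow_inv_iff_of_neg (hpos t ht) hA (by linarith)]
  simp only [mul_zero, sub_zero] at hmono
  linarith

end Scalar

theorem le_rpow_neg_mul_sq_div_of_mul_rpow_le {x y Z θ : ℝ} (hZ : 0 < Z) (hy : 0 < y)
    (h : Z * y ^ θ ≤ x) : x ≤ y ^ (-θ) * x ^ 2 / Z := by
  have hyθ : 0 < y ^ θ := Real.rpow_pos_of_pos hy θ
  have hx : 0 ≤ x := (mul_pos hZ hyθ).le.trans h
  rw [Real.rpow_neg hy.le, le_div_iff₀ hZ, inv_mul_eq_div, le_div_iff₀ hyθ]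
  nlinarith [mul_le_mul_of_nonneg_left h hx]

section Length

variable {F : Type*} [NormedAddCommGroup F] [NormedSpace ℝ F] {γ v : ℝ → F} {f : ℝ → ℝ}
  {Z θ a b : ℝ}

theorem norm_sub_le_of_lojasiewicz (hZ : 0 < Z) (hθ : θ < 1) (hab : a ≤ b)
    (hγ : ∀ s ∈ Icc a b, HasDerivAt γ (v s) s)
    (hf : ∀ s ∈ Icc a b, HasDerivAt f (-‖v s‖ ^ 2) s) (hpos : ∀ s ∈ Icc a b, 0 < f s)
    (hL : ∀ s ∈ Icc a b, Z * f s ^ θ ≤ ‖v s‖) :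
    ‖γ b - γ a‖ ≤ (f a ^ (1 - θ) - f b ^ (1 - θ)) / (Z * (1 - θ)) := by
  have hB : ∀ s ∈ Icc a b, HasDerivAt (fun u => (f a ^ (1 - θ) - f u ^ (1 - θ)) / (Z * (1 - θ)))
      (f s ^ (-θ) * ‖v s‖ ^ 2 / Z) s := by
    intro s hs
    have h := (((Real.hasDerivAt_rpow_const (p := 1 - θ) (Or.inl (hpos s hs).ne')).comp s
      (hf s hs)).const_sub (f a ^ (1 - θ))).div_const (Z * (1 - θ))
    refine h.congr_deriv ?_
    rw [show 1 - θ - 1 = -θ by ring]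
    field_simp [(sub_pos.2 hθ).ne']
  refine image_norm_le_of_norm_deriv_right_le_deriv_boundary'
    (fun s hs => ((hγ s hs).sub_const (γ a)).continuousAt.continuousWithinAt)
    (fun s hs => ((hγ s (Ico_subset_Icc_self hs)).sub_const (γ a)).hasDerivWithinAt)
    (by simp) (fun s hs => (hB s hs).continuousAt.continuousWithinAt)
    (fun s hs => (hB s (Ico_subset_Icc_self hs)).hasDerivWithinAt)
    (fun s hs => le_rpow_neg_mul_sq_div_of_mul_rpow_le hZ (hpos s (Ico_subset_Icc_self hs))
      (hL s (Ico_subset_Icc_self hs)))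
    (right_mem_Icc.2 hab)

theorem norm_sub_le_of_tendsto_of_lojasiewicz {l : F} (hZ : 0 < Z) (hθ : θ < 1)
    (hγ : ∀ s ∈ Ici a, HasDerivAt γ (v s) s) (hf : ∀ s ∈ Ici a, HasDerivAt f (-‖v s‖ ^ 2) s)
    (hpos : ∀ s ∈ Ici a, 0 < f s) (hL : ∀ s ∈ Ici a, Z * f s ^ θ ≤ ‖v s‖)
    (hconv : Tendsto γ atTop (𝓝 l)) :
    ‖γ a - l‖ ≤ f a ^ (1 - θ) / (Z * (1 - θ)) := by
  have hbound : ∀ b ∈ Ici a, ‖γ b - γ a‖ ≤ f a ^ (1 - θ) / (Z * (1 - θ)) := fun b hb => by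
    have hsub : Icc a b ⊆ Ici a := Icc_subset_Ici_self
    refine (norm_sub_le_of_lojasiewicz hZ hθ hb (fun s hs => hγ s (hsub hs))
      (fun s hs => hf s (hsub hs)) (fun s hs => hpos s (hsub hs))
      fun s hs => hL s (hsub hs)).trans ?_
    have : 0 ≤ f b ^ (1 - θ) := Real.rpow_nonneg (hpos b hb).le _
    have : 0 < Z * (1 - θ) := mul_pos hZ (sub_pos.2 hθ)
    gcongr
    linarith
  rw [norm_sub_rev]
  exact le_of_tendsto ((hconv.sub_const (γ a)).norm) (eventually_atTop.2 ⟨a, hbound⟩)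

end Length

theorem hasDerivAt_comp_of_hasDerivAt_neg_gradient {H : Type*} [NormedAddCommGroup H]
    [InnerProductSpace ℝ H] [CompleteSpace H] {E : H → ℝ} {ξ : ℝ → H} {t : ℝ}
    (hE : DifferentiableAt ℝ E (ξ t))
    (hξ : HasDerivAt ξ (-gradient E (ξ t)) t) :
    HasDerivAt (fun s => E (ξ s)) (-‖gradient E (ξ t)‖ ^ 2) t := by
  have h := hE.hasGradientAt.hasFDerivAt.comp_hasDerivAt t hξ
  rwa [InnerProductSpace.toDual_apply_apply, inner_neg_right, real_inner_self_eq_norm_sq] at h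

theorem stmt15_general {H : Type*} [NormedAddCommGroup H] [InnerProductSpace ℝ H]
    [CompleteSpace H]
    (E : H → ℝ) (hE : Differentiable ℝ E)
    (ξ : ℝ → H) (hξ : ∀ t : ℝ, 0 ≤ t → HasDerivAt ξ (-(gradient E (ξ t))) t)
    (γlim : H) (Z δ θ : ℝ) (hZ : 0 < Z)
    (hθ : θ ∈ Set.Ioo (1/2 : ℝ) 1)
    (hLS : ∀ η : H, ‖η - γlim‖ < δ →
      Z * (E η - E γlim) ^ θ ≤ ‖gradient E η‖)
    (hstay : ∀ t : ℝ, 0 ≤ t → ‖ξ t - γlim‖ < δ ∧ E γlim < E (ξ t))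
    (hconv : Tendsto ξ atTop (nhds γlim)) :
    ∀ t : ℝ, 0 ≤ t →
      E (ξ t) - E γlim
        ≤ (Z ^ 2 * (2 * θ - 1) * t + (E (ξ 0) - E γlim) ^ (1 - 2 * θ))
            ^ (-(1 / (2 * θ - 1)))
      ∧ ‖ξ t - γlim‖
          ≤ 1 / (Z * (1 - θ)) *
            (Z ^ 2 * (2 * θ - 1) * t + (E (ξ 0) - E γlim) ^ (1 - 2 * θ))
              ^ (-((1 - θ) / (2 * θ - 1))) := by
  intro t ht
  have h2θ : 0 < 2 * θ - 1 := by linarith [hθ.1]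
  have h1θ : 0 < 1 - θ := by linarith [hθ.2]
  set f : ℝ → ℝ := fun s => E (ξ s) - E γlim
  set A := Z ^ 2 * (2 * θ - 1) * t + f 0 ^ (1 - 2 * θ)
  have hpos : ∀ s ∈ Ici (0 : ℝ), 0 < f s := fun s hs => sub_pos.2 (hstay s hs).2
  have hf : ∀ s ∈ Ici (0 : ℝ), HasDerivAt f (-‖gradient E (ξ s)‖ ^ 2) s := fun s hs =>
    (hasDerivAt_comp_of_hasDerivAt_neg_gradient (hE _) (hξ s hs)).sub_const _
  have hL : ∀ s ∈ Ici (0 : ℝ), Z * f s ^ θ ≤ ‖gradient E (ξ s)‖ := fun s hs =>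
    hLS _ (hstay s hs).1
  have hf' : ∀ s ∈ Ici (0 : ℝ), -‖gradient E (ξ s)‖ ^ 2 ≤ -(Z ^ 2 * f s ^ (2 * θ)) := by
    intro s hs
    rw [mul_comm 2 θ, Real.rpow_mul (hpos s hs).le, Real.rpow_two, ← mul_pow, neg_le_neg_iff]
    exact pow_le_pow_left₀ (by have := Real.rpow_pos_of_pos (hpos s hs) θ; positivity) (hL s hs) 2
  have henergy : f t ≤ A ^ (-(1 / (2 * θ - 1))) :=
    le_rpow_of_hasDerivAt_le_neg_mul_rpow (sq_nonneg Z) (by linarith) hpos hf hf' ht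
  have hA : 0 ≤ A := add_nonneg (by positivity) (Real.rpow_nonneg (hpos 0 self_mem_Ici).le _)
  refine ⟨henergy, ?_⟩
  calc ‖ξ t - γlim‖ ≤ f t ^ (1 - θ) / (Z * (1 - θ)) :=
        norm_sub_le_of_tendsto_of_lojasiewicz hZ hθ.2 (fun s hs => hξ s (ht.trans hs))
          (fun s hs => by simpa only [norm_neg] using hf s (ht.trans hs))
          (fun s hs => hpos s (ht.trans hs))
          (fun s hs => by simpa only [norm_neg] using hL s (ht.trans hs)) hconv
    _ ≤ (A ^ (-(1 / (2 * θ - 1)))) ^ (1 - θ) / (Z * (1 - θ)) := by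
        gcongr
        exact (hpos t ht).le
    _ = _ := by
        rw [← Real.rpow_mul hA, one_div_mul_eq_div]
        ring_nf

/-- Algebraic convergence rate for the gradient flow when the
Łojasiewicz–Simon inequality holds with exponent `θ ∈ (1/2,1)`:
`E(ξ(t)) − E(γ∞) ≤ (Z²(2θ−1)t + (E(ξ(0))−E(γ∞))^{1−2θ})^{−1/(2θ−1)}` and
`‖ξ(t) − γ∞‖ ≤ (1/(Z(1−θ)))(Z²(2θ−1)t + (E(ξ(0))−E(γ∞))^{1−2θ})^{−(1−θ)/(2θ−1)}`. -/
theorem stmt15 {H : Type*} [NormedAddCommGroup H] [InnerProductSpace ℝ H]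
    [CompleteSpace H]
    (E : H → ℝ) (hE : Differentiable ℝ E)
    (ξ : ℝ → H) (hξ : ∀ t : ℝ, 0 ≤ t → HasDerivAt ξ (-(gradient E (ξ t))) t)
    (γlim : H) (Z δ θ : ℝ) (hZ : 0 < Z) (hδ : δ ∈ Set.Ioc (0:ℝ) 1)
    (hθ : θ ∈ Set.Ioo (1/2 : ℝ) 1)
    (hLS : ∀ η : H, ‖η - γlim‖ < δ →
      Z * (E η - E γlim) ^ θ ≤ ‖gradient E η‖)
    (hstay : ∀ t : ℝ, 0 ≤ t → ‖ξ t - γlim‖ < δ ∧ E γlim < E (ξ t))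
    (hconv : Tendsto ξ atTop (nhds γlim)) :
    ∀ t : ℝ, 0 ≤ t →
      E (ξ t) - E γlim
        ≤ (Z ^ 2 * (2 * θ - 1) * t + (E (ξ 0) - E γlim) ^ (1 - 2 * θ))
            ^ (-(1 / (2 * θ - 1)))
      ∧ ‖ξ t - γlim‖
          ≤ 1 / (Z * (1 - θ)) *
            (Z ^ 2 * (2 * θ - 1) * t + (E (ξ 0) - E γlim) ^ (1 - 2 * θ))
              ^ (-((1 - θ) / (2 * θ - 1))) :=
  stmt15_general E hE ξ hξ γlim Z δ θ hZ hθ hLS hstay hconv
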